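/- (Orthoplex bound, complex case) Let d, n be positive integers with d ≥ 2 and n > d², and let Φ = (φ_1, …, φ_n) be any family of unit vectors in ℂ^d. Then μ(Φ) ≥ 1/√d. -/

import Mathlib

/-- The coherence of a family of vectors `Φ` in `𝕜^d`:
`μ(Φ) = max_{j ≠ k} |⟨φ_j, φ_k⟩|` (equal to the max over `j < k` by symmetry),
with the convention that the coherence of a single vector is `0`. -/
noncomputable def coherence {𝕜 : Type*} [RCLike 𝕜] {d n : ℕ}
    (Φ : Fin n → EuclideanSpace 𝕜 (Fin d)) : ℝ :=
  ((Finset.univ.filter fun p : Fin n × Fin n => p.1 ≠ p.2).sup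
    fun p => ‖(inner 𝕜 (Φ p.1) (Φ p.2) : 𝕜)‖₊ : NNReal)

/-!
If every `|⟪φⱼ, φₖ⟫|²` with `j ≠ k` were below `1/d`, the traceless parts `φⱼφⱼ* - I/d` would
form, for the Frobenius inner product, a family with pairwise negative inner products
`|⟪φⱼ, φₖ⟫|² - 1/d` in the `(d² - 1)`-dimensional orthogonal complement of `I`. Such an obtuse
family has at most `dim + 1 = d²` members: a linear relation with one coefficient zero can be taken
real because the Gram matrix is real, and splitting its coefficients by sign, positivity of norms
and obtuseness force both halves to vanish.
-/

open scoped ComplexOrder InnerProductSpace ComplexConjugate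

section Obtuse

variable {𝕜 E ι : Type*} [RCLike 𝕜] [NormedAddCommGroup E] [InnerProductSpace 𝕜 E] [Fintype ι]

theorem inner_sum_smul_sum_smul (v : ι → E) (a b : ι → 𝕜) :
    ⟪∑ i, a i • v i, ∑ j, b j • v j⟫_𝕜 = ∑ i, ∑ j, conj (a i) * b j * ⟪v i, v j⟫_𝕜 := by
  rw [sum_inner]
  refine Finset.sum_congr rfl fun i _ ↦ ?_
  rw [inner_smul_left, inner_sum, Finset.mul_sum]
  refine Finset.sum_congr rfl fun j _ ↦ ?_
  rw [inner_smul_right]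
  ring

variable {v : ι → E}

omit [Fintype ι] in
theorem conj_inner_of_pairwise_inner_neg (hv : Pairwise fun i j ↦ ⟪v i, v j⟫_𝕜 < 0) (i j : ι) :
    conj ⟪v i, v j⟫_𝕜 = ⟪v i, v j⟫_𝕜 := by
  rcases eq_or_ne i j with rfl | hij
  · exact inner_self_conj _
  · exact RCLike.conj_eq_iff_im.mpr (RCLike.neg_iff.mp (hv hij)).2

/-- A real Gram matrix makes a linear relation survive complex conjugation of its coefficients. -/
theorem sum_re_smul_eq_zero (hv : ∀ i j, conj ⟪v i, v j⟫_𝕜 = ⟪v i, v j⟫_𝕜) {c : ι → 𝕜}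
    (hc : ∑ j, c j • v j = 0) : ∑ j, (RCLike.re (c j) : 𝕜) • v j = 0 := by
  have hconj : ∑ j, conj (c j) • v j = 0 := by
    have h := congrArg conj (inner_sum_smul_sum_smul v c c)
    rw [hc, inner_zero_left, map_zero] at h
    simp only [map_sum, map_mul, RCLike.conj_conj, hv] at h
    rw [← inner_self_eq_zero (𝕜 := 𝕜), inner_sum_smul_sum_smul, h]
    simp only [RCLike.conj_conj]
  calc ∑ j, (RCLike.re (c j) : 𝕜) • v j
      = (2⁻¹ : 𝕜) • (∑ j, c j • v j + ∑ j, conj (c j) • v j) := by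
        simp only [RCLike.re_eq_add_conj, ← Finset.sum_add_distrib, Finset.smul_sum, ← add_smul,
          smul_smul, div_eq_inv_mul]
    _ = 0 := by rw [hc, hconj, add_zero, smul_zero]

theorem eq_zero_of_nonneg_of_sum_smul_eq_zero (hv : Pairwise fun i j ↦ ⟪v i, v j⟫_𝕜 < 0)
    {p : ι → ℝ} (hp : 0 ≤ p) {i₀ : ι} (hi₀ : p i₀ = 0) (hsum : ∑ j, (p j : 𝕜) • v j = 0) :
    p = 0 := by
  have hterm : ∀ j, (p j : 𝕜) * ⟪v i₀, v j⟫_𝕜 ≤ 0 := fun j ↦ by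
    rcases eq_or_ne i₀ j with rfl | hj
    · simp [hi₀]
    · exact mul_nonpos_of_nonneg_of_nonpos (RCLike.ofReal_nonneg.mpr (hp j)) (hv hj).le
  have hzero : ∑ j, (p j : 𝕜) * ⟪v i₀, v j⟫_𝕜 = 0 := by
    simpa only [inner_sum, inner_smul_right, inner_zero_right] using congrArg (⟪v i₀, ·⟫_𝕜) hsum
  funext j
  have := (Finset.sum_eq_zero_iff_of_nonpos fun j _ ↦ hterm j).mp hzero j (Finset.mem_univ j)
  rcases eq_or_ne i₀ j with rfl | hj
  · exact hi₀
  · simpa [(hv hj).ne] using this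

/-- Splitting `x = x⁺ - x⁻`, the two nonnegative combinations coincide, and their common value
has squared norm `∑ x⁺ᵢ x⁻ⱼ ⟪vᵢ, vⱼ⟫ ≤ 0`. -/
theorem eq_zero_of_real_sum_smul_eq_zero (hv : Pairwise fun i j ↦ ⟪v i, v j⟫_𝕜 < 0)
    {x : ι → ℝ} {i₀ : ι} (hi₀ : x i₀ = 0) (hsum : ∑ j, (x j : 𝕜) • v j = 0) : x = 0 := by
  set u := ∑ j, (((x j)⁺ : ℝ) : 𝕜) • v j
  have hu : u = ∑ j, (((x j)⁻ : ℝ) : 𝕜) • v j := by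
    rw [← sub_eq_zero, ← Finset.sum_sub_distrib, ← hsum]
    simp only [← sub_smul, ← RCLike.ofReal_sub, posPart_sub_negPart]
  have hu_nonpos : ⟪u, u⟫_𝕜 ≤ 0 := by
    nth_rw 2 [hu]
    rw [inner_sum_smul_sum_smul]
    refine Finset.sum_nonpos fun i _ ↦ Finset.sum_nonpos fun j _ ↦ ?_
    rw [RCLike.conj_ofReal, ← RCLike.ofReal_mul]
    rcases eq_or_ne i j with rfl | hij
    · rcases le_total (x i) 0 with h | h <;> simp [h]
    · exact mul_nonpos_of_nonneg_of_nonpos (RCLike.ofReal_nonneg.mpr (by positivity)) (hv hij).le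
  have hu0 : u = 0 := inner_self_eq_zero.mp <|
    le_antisymm hu_nonpos (RCLike.nonneg_iff.mpr ⟨inner_self_nonneg, inner_self_im _⟩)
  have hpos := eq_zero_of_nonneg_of_sum_smul_eq_zero (p := fun j ↦ (x j)⁺) (i₀ := i₀) hv
    (fun j ↦ posPart_nonneg (x j)) (by simp [hi₀]) hu0
  have hneg := eq_zero_of_nonneg_of_sum_smul_eq_zero (p := fun j ↦ (x j)⁻) (i₀ := i₀) hv
    (fun j ↦ negPart_nonneg (x j)) (by simp [hi₀]) (hu ▸ hu0)
  funext j
  rw [← posPart_sub_negPart (x j), congrFun hpos j, congrFun hneg j, Pi.zero_apply, sub_zero]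

theorem eq_zero_of_sum_smul_eq_zero_of_pairwise_inner_neg
    (hv : Pairwise fun i j ↦ ⟪v i, v j⟫_𝕜 < 0) {c : ι → 𝕜} {i₀ : ι} (hi₀ : c i₀ = 0)
    (hc : ∑ j, c j • v j = 0) : c = 0 := by
  have hreal := conj_inner_of_pairwise_inner_neg hv
  have hre : (fun j ↦ RCLike.re (c j)) = 0 :=
    eq_zero_of_real_sum_smul_eq_zero hv (i₀ := i₀) (by simp [hi₀]) (sum_re_smul_eq_zero hreal hc)
  have him : (fun j ↦ RCLike.im (c j)) = 0 := by
    refine eq_zero_of_real_sum_smul_eq_zero hv (i₀ := i₀) (by simp [hi₀]) ?_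
    have hIc : ∑ j, -(RCLike.I * c j) • v j = 0 := by
      simp only [neg_smul, mul_smul, Finset.sum_neg_distrib, ← Finset.smul_sum, hc, smul_zero,
        neg_zero]
    simpa [RCLike.I_mul_re] using sum_re_smul_eq_zero hreal hIc
  funext j
  exact RCLike.ext (by simpa using congrFun hre j) (by simpa using congrFun him j)

theorem card_le_finrank_add_one_of_pairwise_inner_neg [FiniteDimensional 𝕜 E]
    (hv : Pairwise fun i j ↦ ⟪v i, v j⟫_𝕜 < 0) : Fintype.card ι ≤ Module.finrank 𝕜 E + 1 := by
  rcases isEmpty_or_nonempty ι with hι | ⟨⟨i₀⟩⟩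
  · simp
  let T : (ι → 𝕜) →ₗ[𝕜] E × 𝕜 := (Fintype.linearCombination 𝕜 v).prod (LinearMap.proj i₀)
  have hT : Function.Injective T := by
    rw [← LinearMap.ker_eq_bot, LinearMap.ker_eq_bot']
    intro c hc
    simp only [T, LinearMap.prod_apply, Function.prod, Prod.mk_eq_zero,
      Fintype.linearCombination_apply, LinearMap.proj_apply] at hc
    exact eq_zero_of_sum_smul_eq_zero_of_pairwise_inner_neg hv hc.2 hc.1
  simpa [Module.finrank_prod] using LinearMap.finrank_le_finrank_of_injective hT

end Obtuse

section OuterProduct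

variable {𝕜 κ : Type*} [RCLike 𝕜] [Fintype κ] [DecidableEq κ]

/-- The rank-one matrix `x x*` and the identity matrix, as vectors of `𝕜^(κ × κ)`; the inner
product there is the Frobenius inner product `⟪A, B⟫ = tr (A* B)`. -/
noncomputable def selfOuter (x : EuclideanSpace 𝕜 κ) : EuclideanSpace 𝕜 (κ × κ) :=
  WithLp.toLp 2 fun p ↦ x p.1 * conj (x p.2)

noncomputable def flatOne : EuclideanSpace 𝕜 (κ × κ) :=
  WithLp.toLp 2 fun p ↦ if p.1 = p.2 then 1 else 0

omit [DecidableEq κ] in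
theorem inner_selfOuter_selfOuter (x y : EuclideanSpace 𝕜 κ) :
    ⟪selfOuter x, selfOuter y⟫_𝕜 = ((‖⟪x, y⟫_𝕜‖ ^ 2 : ℝ) : 𝕜) := by
  have hxy : ⟪x, y⟫_𝕜 = ∑ a, conj (x a) * y a := by simp [PiLp.inner_apply, mul_comm]
  rw [RCLike.ofReal_pow, ← RCLike.mul_conj, hxy, map_sum, Finset.sum_mul_sum, PiLp.inner_apply,
    Fintype.sum_prod_type]
  refine Finset.sum_congr rfl fun a _ ↦ Finset.sum_congr rfl fun b _ ↦ ?_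
  simp only [selfOuter, RCLike.inner_apply, map_mul, RCLike.conj_conj]
  ring

theorem inner_selfOuter_flatOne (x : EuclideanSpace 𝕜 κ) :
    ⟪selfOuter x, flatOne⟫_𝕜 = ((‖x‖ ^ 2 : ℝ) : 𝕜) := by
  rw [RCLike.ofReal_pow, ← inner_self_eq_norm_sq_to_K, PiLp.inner_apply, PiLp.inner_apply,
    Fintype.sum_prod_type]
  refine Finset.sum_congr rfl fun a _ ↦ ?_
  simp [selfOuter, flatOne, RCLike.conj_mul]

theorem inner_flatOne_flatOne :
    ⟪(flatOne : EuclideanSpace 𝕜 (κ × κ)), flatOne⟫_𝕜 = Fintype.card κ := by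
  rw [PiLp.inner_apply, Fintype.sum_prod_type]
  simp [flatOne, apply_ite]

noncomputable def tracelessSelfOuter (x : EuclideanSpace 𝕜 κ) : EuclideanSpace 𝕜 (κ × κ) :=
  selfOuter x - (Fintype.card κ : 𝕜)⁻¹ • flatOne

theorem inner_flatOne_tracelessSelfOuter {x : EuclideanSpace 𝕜 κ} (hx : ‖x‖ = 1) :
    ⟪flatOne, tracelessSelfOuter x⟫_𝕜 = 0 := by
  have : Nonempty κ := by
    by_contra h
    rw [not_nonempty_iff] at h
    simp [Subsingleton.elim x 0] at hx
  rw [tracelessSelfOuter, inner_sub_right, inner_smul_right, inner_flatOne_flatOne,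
    ← inner_conj_symm, inner_selfOuter_flatOne, hx]
  simp

theorem inner_tracelessSelfOuter {x y : EuclideanSpace 𝕜 κ} (hx : ‖x‖ = 1) (hy : ‖y‖ = 1) :
    ⟪tracelessSelfOuter x, tracelessSelfOuter y⟫_𝕜 =
      ((‖⟪x, y⟫_𝕜‖ ^ 2 - (Fintype.card κ : ℝ)⁻¹ : ℝ) : 𝕜) := by
  rw [tracelessSelfOuter, inner_sub_left, inner_smul_left, inner_flatOne_tracelessSelfOuter hy,
    mul_zero, sub_zero, tracelessSelfOuter, inner_sub_right, inner_smul_right,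
    inner_selfOuter_selfOuter, inner_selfOuter_flatOne, hx]
  push_cast
  ring

end OuterProduct

theorem norm_inner_le_coherence {𝕜 : Type*} [RCLike 𝕜] {d n : ℕ}
    (Φ : Fin n → EuclideanSpace 𝕜 (Fin d)) {j k : Fin n} (hjk : j ≠ k) :
    ‖⟪Φ j, Φ k⟫_𝕜‖ ≤ coherence Φ := by
  have := Finset.le_sup (f := fun p : Fin n × Fin n ↦ ‖⟪Φ p.1, Φ p.2⟫_𝕜‖₊)
    (Finset.mem_filter.mpr ⟨Finset.mem_univ (j, k), hjk⟩ :
      (j, k) ∈ Finset.univ.filter fun p : Fin n × Fin n ↦ p.1 ≠ p.2)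
  exact_mod_cast this

theorem orthoplex_bound_complex_general {d n : ℕ} (hn : d ^ 2 < n)
    (Φ : Fin n → EuclideanSpace ℂ (Fin d))
    (hunit : ∀ j, ‖Φ j‖ = 1) :
    1 / Real.sqrt d ≤ coherence Φ := by
  by_contra! hcoh
  set e : EuclideanSpace ℂ (Fin d × Fin d) := flatOne
  have he : e ≠ 0 := fun h ↦ by
    simpa [e, h, hunit] using inner_selfOuter_flatOne (Φ ⟨0, (Nat.zero_le _).trans_lt hn⟩)
  let g : Fin n → (ℂ ∙ e)ᗮ := fun j ↦ ⟨tracelessSelfOuter (Φ j),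
    Submodule.mem_orthogonal_singleton_iff_inner_right.mpr
      (inner_flatOne_tracelessSelfOuter (hunit j))⟩
  have hg : Pairwise fun j k ↦ ⟪g j, g k⟫_ℂ < 0 := fun j k hjk ↦ by
    change ⟪tracelessSelfOuter (Φ j), tracelessSelfOuter (Φ k)⟫_ℂ < 0
    rw [inner_tracelessSelfOuter (hunit j) (hunit k), RCLike.ofReal_lt_zero,
      sub_neg, Fintype.card_fin]
    calc ‖⟪Φ j, Φ k⟫_ℂ‖ ^ 2 < (1 / √d) ^ 2 := by
          gcongr
          exact (norm_inner_le_coherence Φ hjk).trans_lt hcoh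
      _ = (d : ℝ)⁻¹ := by rw [div_pow, one_pow, Real.sq_sqrt (Nat.cast_nonneg d), one_div]
  have hcard := card_le_finrank_add_one_of_pairwise_inner_neg hg
  have hdim := Submodule.finrank_add_finrank_orthogonal (ℂ ∙ e)
  rw [finrank_span_singleton he, finrank_euclideanSpace, Fintype.card_prod,
    Fintype.card_fin] at hdim
  rw [Fintype.card_fin] at hcard
  rw [sq] at hn
  omega

/-- Orthoplex bound, complex case: any `n > d²` unit vectors in `ℂ^d` (`d ≥ 2`)
satisfy `μ(Φ) ≥ 1/√d`. -/
theorem orthoplex_bound_complex {d n : ℕ} (hd : 2 ≤ d) (hn : d ^ 2 < n)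
    (Φ : Fin n → EuclideanSpace ℂ (Fin d))
    (hunit : ∀ j, ‖Φ j‖ = 1) :
    1 / Real.sqrt d ≤ coherence Φ :=
  orthoplex_bound_complex_general hn Φ hunit
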